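/- arXiv:math/0601337 — 4 statements merged into one kernel-verified Lean document; each statement's English description precedes it below -/
import Mathlib

section
/- Let w ∈ ℂ and x₁, x₂, x₃ ∈ ℂ with Im(xᵢ·conj(xⱼ)) ≠ 0 for all i ≠ j (in particular every xᵢ ≠ 0 and every ratio xᵢ/xⱼ with i ≠ j has nonzero imaginary part). Then Im P₃(w,x₁,x₂,x₃) = R₃(Im(w/x₃), Im(x₁/x₃), Im(x₂/x₃)) + R₃(Im(w/x₁), Im(x₂/x₁), Im(x₃/x₁)) + R₃(Im(w/x₂), Im(x₃/x₂), Im(x₁/x₂)). -/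
namespace EGG

/-- Integer vectors in `ℤ³`. -/
abbrev V : Type := Fin 3 → ℤ

/-- gcd of the three coordinates. -/
def gcd3 (v : V) : ℕ := Nat.gcd (Nat.gcd (v 0).natAbs (v 1).natAbs) (v 2).natAbs

/-- A vector of `ℤ³` is primitive if it is nonzero and the gcd of its coordinates is 1. -/
def Primitive (a : V) : Prop := a ≠ 0 ∧ gcd3 a = 1

/-- Cross product of integer vectors. -/
def cross (a b : V) : V :=
  ![a 1 * b 2 - a 2 * b 1, a 2 * b 0 - a 0 * b 2, a 0 * b 1 - a 1 * b 0]

/-- Dot product of integer vectors. -/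
def dotZ (α a : V) : ℤ := α 0 * a 0 + α 1 * a 1 + α 2 * a 2

/-- Dot product of a rational vector with an integer vector. -/
def dotQ (α : Fin 3 → ℚ) (a : V) : ℚ := α 0 * (a 0 : ℚ) + α 1 * (a 1 : ℚ) + α 2 * (a 2 : ℚ)

/-- Dot product of a real vector with an integer vector. -/
def dotR (l : Fin 3 → ℝ) (a : V) : ℝ := l 0 * (a 0 : ℝ) + l 1 * (a 1 : ℝ) + l 2 * (a 2 : ℝ)

/-- The pairing `α(x) = α₁x₁+α₂x₂+α₃x₃` of a rational vector with a complex vector. -/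
noncomputable def pairQ (α : Fin 3 → ℚ) (x : Fin 3 → ℂ) : ℂ :=
  (α 0 : ℂ) * x 0 + (α 1 : ℂ) * x 1 + (α 2 : ℂ) * x 2

/-- The pairing `α(x) = α₁x₁+α₂x₂+α₃x₃` of an integer vector with a complex vector. -/
noncomputable def pairZ (α : V) (x : Fin 3 → ℂ) : ℂ :=
  (α 0 : ℂ) * x 0 + (α 1 : ℂ) * x 1 + (α 2 : ℂ) * x 2

/-- The canonical map `ℤ³ → ℚ³`. -/
def toQ (a : V) : Fin 3 → ℚ := fun i => (a i : ℚ)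

/-- Determinant of the 3×3 matrix with rows `α, β, δ`. -/
def det3Q (α β δ : Fin 3 → ℚ) : ℚ := Matrix.det (Matrix.of ![α, β, δ])

/-- `(α, β)` is an oriented basis of the plane `H(a) = {α : α·a = 0}`. -/
def IsOrientedBasis (a : V) (α β : Fin 3 → ℚ) : Prop :=
  dotQ α a = 0 ∧ dotQ β a = 0 ∧
  LinearIndependent ℚ ![α, β] ∧
  (∀ δ : Fin 3 → ℚ, dotQ δ a = 0 → ∃ p q : ℚ, δ = p • α + q • β) ∧
  (∀ δ : Fin 3 → ℚ, 0 < dotQ δ a → 0 < det3Q α β δ)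

/-- The domain `U⁺_a ⊆ ℂ³`. -/
noncomputable def UPlus (a : V) : Set (Fin 3 → ℂ) :=
  {x | ∃ α β : Fin 3 → ℚ, IsOrientedBasis a α β ∧
    0 < (pairQ α x * (starRingEnd ℂ) (pairQ β x)).im}

/-- `γ` is the direction vector of the wedge `(a,b)`: `γ` is primitive and
`a × b = s • γ` for some integer `s ≥ 1` (the modulus). -/
def IsDirVec (a b γ : V) : Prop :=
  Primitive γ ∧ ∃ s : ℤ, 1 ≤ s ∧ cross a b = s • γ

/-- `C₊₋(a,b) = {δ ∈ ℤ³ : δ·a > 0, δ·b ≤ 0}`. -/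
def Cpm (a b : V) : Set V := {δ | 0 < dotZ δ a ∧ dotZ δ b ≤ 0}

/-- `C₋₊(a,b) = {δ ∈ ℤ³ : δ·a ≤ 0, δ·b > 0}`. -/
def Cmp (a b : V) : Set V := {δ | dotZ δ a ≤ 0 ∧ 0 < dotZ δ b}

/-- The factor `1 - e^{-2πi(δ(x)-w)/γ(x)}` appearing in the numerator of `Γ_{a,b}`. -/
noncomputable def gammaFacP (γ : V) (x : Fin 3 → ℂ) (w : ℂ) (δ : V) : ℂ :=
  1 - Complex.exp (-(2 * (Real.pi : ℂ) * Complex.I) * (pairZ δ x - w) / pairZ γ x)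

/-- The factor `1 - e^{2πi(δ(x)-w)/γ(x)}` appearing in the denominator of `Γ_{a,b}`. -/
noncomputable def gammaFacM (γ : V) (x : Fin 3 → ℂ) (w : ℂ) (δ : V) : ℂ :=
  1 - Complex.exp ((2 * (Real.pi : ℂ) * Complex.I) * (pairZ δ x - w) / pairZ γ x)

/-- The gamma function `Γ_{a,b}(w,x)` of the wedge `(a,b)` with direction vector `γ`:
the products run over the sets `C₊₋(a,b)/ℤγ` and `C₋₊(a,b)/ℤγ`; each factor is evaluated
on the chosen representative `Quotient.out q` of the class `q` (the factors are constant
on classes modulo `ℤγ`). -/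
noncomputable def GammaWedge (a b γ : V) (w : ℂ) (x : Fin 3 → ℂ) : ℂ :=
  if a = b then 1 else
    (∏' q : (QuotientAddGroup.mk '' Cpm a b : Set (V ⧸ AddSubgroup.zmultiples γ)),
      gammaFacP γ x w (Quotient.out (q : V ⧸ AddSubgroup.zmultiples γ))) /
    (∏' q : (QuotientAddGroup.mk '' Cmp a b : Set (V ⧸ AddSubgroup.zmultiples γ)),
      gammaFacM γ x w (Quotient.out (q : V ⧸ AddSubgroup.zmultiples γ)))

/-- The theta function `θ₀(z,τ)`, for `Im τ > 0`. -/
noncomputable def theta0 (z τ : ℂ) : ℂ :=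
  ∏' j : ℕ, ((1 - Complex.exp (2 * (Real.pi : ℂ) * Complex.I * (((j : ℂ) + 1) * τ - z))) *
    (1 - Complex.exp (2 * (Real.pi : ℂ) * Complex.I * ((j : ℂ) * τ + z))))

/-- The elliptic gamma function `Γ(z,τ,σ)`, for `Im τ > 0` and `Im σ > 0`. -/
noncomputable def ellGamma (z τ σ : ℂ) : ℂ :=
  (∏' p : ℕ × ℕ, (1 - Complex.exp (2 * (Real.pi : ℂ) * Complex.I *
      (((p.1 : ℂ) + 1) * τ + ((p.2 : ℂ) + 1) * σ - z)))) /
  (∏' p : ℕ × ℕ, (1 - Complex.exp (2 * (Real.pi : ℂ) * Complex.I *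
      ((p.1 : ℂ) * τ + (p.2 : ℂ) * σ + z))))

/-- The elliptic gamma function `Γ̃(z,τ,σ)` in the domain `Im τ < 0 < Im σ`. -/
noncomputable def ellGammaTilde (z τ σ : ℂ) : ℂ :=
  (∏' p : ℕ × ℕ, (1 - Complex.exp (2 * (Real.pi : ℂ) * Complex.I *
      (z - ((p.1 : ℂ) + 1) * τ + (p.2 : ℂ) * σ)))) /
  (∏' p : ℕ × ℕ, (1 - Complex.exp (2 * (Real.pi : ℂ) * Complex.I *
      (-z - (p.1 : ℂ) * τ + ((p.2 : ℂ) + 1) * σ))))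

/-- The polynomial `P₂`. -/
noncomputable def P2 (w x₁ x₂ : ℂ) : ℂ :=
  (w ^ 2 - (x₁ + x₂) * w + (x₁ ^ 2 + x₂ ^ 2 + 3 * x₁ * x₂) / 6) / (x₁ * x₂)

/-- The Bernoulli polynomial `P₃ = B₃,₃`. -/
noncomputable def P3 (w x₁ x₂ x₃ : ℂ) : ℂ :=
  w ^ 3 / (x₁ * x₂ * x₃) - (3 * (x₁ + x₂ + x₃) / (2 * (x₁ * x₂ * x₃))) * w ^ 2
    + ((x₁ ^ 2 + x₂ ^ 2 + x₃ ^ 2 + 3 * x₁ * x₂ + 3 * x₂ * x₃ + 3 * x₁ * x₃)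
        / (2 * (x₁ * x₂ * x₃))) * w
    - (1 / 4) * (x₁ + x₂ + x₃) * (1 / x₁ + 1 / x₂ + 1 / x₃)

/-- The real polynomial `R₃ = B₂,₃`. -/
noncomputable def R3 (ζ t s : ℝ) : ℝ :=
  ζ ^ 3 / (t * s) - (3 / 2) * (1 / t + 1 / s) * ζ ^ 2
    + (t / (2 * s) + s / (2 * t) + 3 / 2) * ζ - (t + s) / 4

/-- The hermitian weight `h₂(z,τ)` for the theta bundle. -/
noncomputable def h2 (z τ : ℂ) : ℝ :=
  Real.exp (-2 * Real.pi * z.im ^ 2 / τ.im + 2 * Real.pi * (z - τ / 6).im)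

/-- The hermitian weight `h₃(z,τ,σ)`. -/
noncomputable def h3 (z τ σ : ℂ) : ℝ :=
  Real.exp (-(2 * Real.pi / 3) * R3 z.im τ.im σ.im)

/-- The finite product of theta functions `Δ` with parameters `A₁ = α₁(x)`, `A₂ = α₂(x)`,
`A₃ = α₃(x)` and first framing coordinate `m = μ(a)`:
`∏_{j=0}^{m-1} θ₀((w+jA₁)/A₃, A₂/A₃)` for `m ≥ 0` and
`(∏_{j=m}^{-1} θ₀((w+jA₁)/A₃, A₂/A₃))⁻¹` for `m < 0`. -/
noncomputable def DeltaInt (w A₁ A₂ A₃ : ℂ) (m : ℤ) : ℂ :=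
  if 0 ≤ m then
    ∏ j ∈ Finset.range m.toNat, theta0 ((w + (j : ℂ) * A₁) / A₃) (A₂ / A₃)
  else
    (∏ j ∈ Finset.range (-m).toNat, theta0 ((w - ((j : ℂ) + 1) * A₁) / A₃) (A₂ / A₃))⁻¹

/-!
Since `Im X = (X - conj X) / 2i`, the claim is the specialisation `w' = conj w`, `y = conj x` of a
rational-function identity over any field in which `2` is invertible:
`P₃(w, x) - P₃(w', y) = Σⱼ R₃(w/xⱼ - w'/yⱼ, xⱼ₊₁/xⱼ - yⱼ₊₁/yⱼ, xⱼ₊₂/xⱼ - yⱼ₊₂/yⱼ)`.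
For conjugate arguments every entry of `R₃` equals `2i` times an imaginary part, and `R₃` is
homogeneous of degree one, so the factor `2i` comes out of each term.
-/

section Field

variable {K L : Type*} [Field K] [Field L]

noncomputable def P3gen (w x₁ x₂ x₃ : K) : K :=
  w ^ 3 / (x₁ * x₂ * x₃) - (3 * (x₁ + x₂ + x₃) / (2 * (x₁ * x₂ * x₃))) * w ^ 2
    + ((x₁ ^ 2 + x₂ ^ 2 + x₃ ^ 2 + 3 * x₁ * x₂ + 3 * x₂ * x₃ + 3 * x₁ * x₃)
        / (2 * (x₁ * x₂ * x₃))) * w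
    - (1 / 4) * (x₁ + x₂ + x₃) * (1 / x₁ + 1 / x₂ + 1 / x₃)

noncomputable def R3gen (ζ t s : K) : K :=
  ζ ^ 3 / (t * s) - (3 / 2) * (1 / t + 1 / s) * ζ ^ 2
    + (t / (2 * s) + s / (2 * t) + 3 / 2) * ζ - (t + s) / 4

theorem P3_eq_P3gen (w x₁ x₂ x₃ : ℂ) : P3 w x₁ x₂ x₃ = P3gen w x₁ x₂ x₃ := rfl

theorem map_P3gen (f : K →+* L) (w x₁ x₂ x₃ : K) :
    f (P3gen w x₁ x₂ x₃) = P3gen (f w) (f x₁) (f x₂) (f x₃) := by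
  simp [P3gen, map_ofNat]

theorem map_R3gen (f : K →+* L) (ζ t s : K) : f (R3gen ζ t s) = R3gen (f ζ) (f t) (f s) := by
  simp [R3gen, map_ofNat]

theorem R3gen_mul {c : K} (hc : c ≠ 0) (ζ t s : K) :
    R3gen (c * ζ) (c * t) (c * s) = c * R3gen ζ t s := by
  unfold R3gen
  field_simp

theorem P3gen_sub_P3gen [NeZero (2 : K)] (w x₁ x₂ x₃ w' y₁ y₂ y₃ : K)
    (h₁ : x₁ ≠ 0) (h₂ : x₂ ≠ 0) (h₃ : x₃ ≠ 0) (h₁' : y₁ ≠ 0) (h₂' : y₂ ≠ 0) (h₃' : y₃ ≠ 0)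
    (h₁₂ : x₁ * y₂ - x₂ * y₁ ≠ 0) (h₁₃ : x₁ * y₃ - x₃ * y₁ ≠ 0)
    (h₂₃ : x₂ * y₃ - x₃ * y₂ ≠ 0) :
    P3gen w x₁ x₂ x₃ - P3gen w' y₁ y₂ y₃ =
      R3gen (w / x₃ - w' / y₃) (x₁ / x₃ - y₁ / y₃) (x₂ / x₃ - y₂ / y₃) +
      R3gen (w / x₁ - w' / y₁) (x₂ / x₁ - y₂ / y₁) (x₃ / x₁ - y₃ / y₁) +
      R3gen (w / x₂ - w' / y₂) (x₃ / x₂ - y₃ / y₂) (x₁ / x₂ - y₁ / y₂) := by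
  have h₂₁ : x₂ * y₁ - x₁ * y₂ ≠ 0 := by rwa [← neg_sub, neg_ne_zero]
  have h₃₁ : x₃ * y₁ - x₁ * y₃ ≠ 0 := by rwa [← neg_sub, neg_ne_zero]
  have h₃₂ : x₃ * y₂ - x₂ * y₃ ≠ 0 := by rwa [← neg_sub, neg_ne_zero]
  have h₄ : (4 : K) ≠ 0 := by
    rw [show (4 : K) = 2 * 2 by norm_num]
    exact mul_ne_zero two_ne_zero two_ne_zero
  unfold P3gen R3gen
  field_simp
  ring

end Field

open Complex ComplexConjugate

theorem sub_conj_eq_two_I_mul_im (z : ℂ) : z - conj z = 2 * I * z.im := by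
  rw [sub_conj]
  push_cast
  ring

theorem ofReal_R3 (ζ t s : ℝ) : (R3 ζ t s : ℂ) = R3gen (ζ : ℂ) t s :=
  map_R3gen ofRealHom ζ t s

theorem mul_conj_sub_mul_conj_ne_zero {x y : ℂ} (h : (x * conj y).im ≠ 0) :
    x * conj y - y * conj x ≠ 0 := by
  rw [show y * conj x = conj (x * conj y) by simp [mul_comm], sub_conj_eq_two_I_mul_im]
  exact mul_ne_zero (by simp) (ofReal_ne_zero.2 h)

/-- `Im P₃(w,x₁,x₂,x₃)` as a sum of three `R₃`-terms. -/
theorem statement11 (w x₁ x₂ x₃ : ℂ)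
    (h12 : (x₁ * (starRingEnd ℂ) x₂).im ≠ 0)
    (h13 : (x₁ * (starRingEnd ℂ) x₃).im ≠ 0)
    (h23 : (x₂ * (starRingEnd ℂ) x₃).im ≠ 0) :
    (P3 w x₁ x₂ x₃).im =
      R3 (w / x₃).im (x₁ / x₃).im (x₂ / x₃).im +
      R3 (w / x₁).im (x₂ / x₁).im (x₃ / x₁).im +
      R3 (w / x₂).im (x₃ / x₂).im (x₁ / x₂).im := by
  have hx₁ : x₁ ≠ 0 := by rintro rfl; simp at h12
  have hx₂ : x₂ ≠ 0 := by rintro rfl; simp at h12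
  have hx₃ : x₃ ≠ 0 := by rintro rfl; simp at h13
  have h2I : (2 * I : ℂ) ≠ 0 := by simp
  have key := P3gen_sub_P3gen w x₁ x₂ x₃ (conj w) (conj x₁) (conj x₂) (conj x₃) hx₁ hx₂ hx₃
    (by simpa) (by simpa) (by simpa) (mul_conj_sub_mul_conj_ne_zero h12)
    (mul_conj_sub_mul_conj_ne_zero h13) (mul_conj_sub_mul_conj_ne_zero h23)
  simp only [← map_div₀, ← map_P3gen, ← P3_eq_P3gen, sub_conj_eq_two_I_mul_im, R3gen_mul h2I,
    ← ofReal_R3, ← mul_add] at key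
  exact_mod_cast mul_left_cancel₀ h2I key

end EGG
end

section
/- Let r ≥ 2 and let x₁,…,x_r ∈ ℂ be linearly independent over ℚ; set x = (x₁,…,x_r) ∈ ℂ^r. Then for every i with 0 ≤ i ≤ r−1, the family of vectors π(e_{j₁}) ∧ ⋯ ∧ π(e_{jᵢ}) ∈ ⋀ⁱ_ℂ (ℂ^r/ℂ·x), indexed by the subsets {j₁ < ⋯ < jᵢ} of {1,…,r} of cardinality i, is linearly independent over ℚ. -/
/-!
Push a rational relation `∑ q_S π(e_S) = 0` through `ω ↦ x ∧ ω̃` into `⋀ⁱ⁺¹ ℂ^r` and read off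
the coordinate of `e_{j₀} ∧ e_{S₀}`, where `j₀ ∉ S₀` exists because `i < r`. Expanding the
resulting `(i+1)`-minor along the row `x` writes that coordinate as `∑ c_j x_j` with rational
`c_j`, and `c_{j₀} = q_{S₀}`; the `ℚ`-independence of the `x_j` forces `q_{S₀} = 0`.
-/

namespace EGG14

/-- Any complex vector space is a `ℚ`-vector space by restriction of scalars. -/
noncomputable local instance ratModule (M : Type*) [AddCommGroup M] [Module ℂ M] :
    Module ℚ M :=
  Module.compHom M (algebraMap ℚ ℂ)

lemma rat_smul_eq_cast_smul {M : Type*} [AddCommGroup M] [Module ℂ M] (q : ℚ) (m : M) :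
    q • m = (q : ℂ) • m := by
  rw [← eq_ratCast (algebraMap ℚ ℂ)]
  rfl

lemma sum_mul_eq_zero_of_linearIndependent {ι κ : Type*} [Fintype ι] [Fintype κ] {y : κ → ℂ}
    (hy : LinearIndependent ℚ y) {q : ι → ℚ} {c : ι → κ → ℚ}
    (h : ∑ s, (q s : ℂ) * ∑ l, (c s l : ℂ) * y l = 0) (l : κ) :
    ∑ s, q s * c s l = 0 := by
  refine Fintype.linearIndependent_iff.mp hy (fun l => ∑ s, q s * c s l) ?_ l
  rw [← h]
  simp only [rat_smul_eq_cast_smul, smul_eq_mul, Rat.cast_sum, Rat.cast_mul, Finset.mul_sum,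
    Finset.sum_mul, mul_assoc]
  exact Finset.sum_comm

open ExteriorAlgebra Set.powersetCard

section Wedge

variable {R M : Type*} [CommRing R] [AddCommGroup M] [Module R M]

lemma ι_mul_ι_eq_of_sub_mem_span {x y z : M} (h : y - z ∈ R ∙ x) :
    ι R x * ι R y = ι R x * ι R z := by
  obtain ⟨c, hc⟩ := Submodule.mem_span_singleton.mp h
  rw [← sub_eq_zero, ← mul_sub, ← map_sub, ← hc, map_smul, mul_smul_comm, ι_sq_zero, smul_zero]

lemma ι_mul_ιMulti_eq_of_sub_mem_span (x : M) {n : ℕ} {v w : Fin n → M}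
    (h : ∀ k, v k - w k ∈ R ∙ x) :
    ι R x * ιMulti R n v = ι R x * ιMulti R n w := by
  induction n with
  | zero => rw [Subsingleton.elim v w]
  | succ n ih =>
    rw [ιMulti_succ_apply, ιMulti_succ_apply, ← mul_assoc, ← mul_assoc,
      ι_mul_ι_eq_of_sub_mem_span (h 0), eq_neg_of_add_eq_zero_left (ι_add_mul_swap x (w 0)),
      neg_mul, neg_mul, mul_assoc, mul_assoc,
      ih (v := Matrix.vecTail v) (w := Matrix.vecTail w) fun k => h k.succ]

end Wedge

section WedgeLift

variable {K M : Type*} [Field K] [AddCommGroup M] [Module K M]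

/-- `ω ↦ x ∧ ω̃` for any lift `ω̃` of `ω`; the choice of lift does not matter since `x ∧ x = 0`. -/
noncomputable def wedgeLift (x : M) : ExteriorAlgebra K (M ⧸ K ∙ x) →ₗ[K] ExteriorAlgebra K M :=
  LinearMap.mulLeft K (ι K x) ∘ₗ
    (map (Classical.choose ((K ∙ x).mkQ.exists_rightInverse_of_surjective
      (Submodule.range_mkQ _)))).toLinearMap

lemma wedgeLift_ιMulti_mkQ (x : M) {n : ℕ} (v : Fin n → M) :
    wedgeLift x (ιMulti K n fun k => (K ∙ x).mkQ (v k)) = ι K x * ιMulti K n v := by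
  have hg := Classical.choose_spec ((K ∙ x).mkQ.exists_rightInverse_of_surjective
    (Submodule.range_mkQ _))
  rw [wedgeLift, LinearMap.comp_apply, AlgHom.toLinearMap_apply, map_apply_ιMulti,
    LinearMap.mulLeft_apply]
  refine ι_mul_ιMulti_eq_of_sub_mem_span x fun k => ?_
  rw [← Submodule.Quotient.mk_eq_zero, Submodule.Quotient.mk_sub, sub_eq_zero]
  exact LinearMap.congr_fun hg ((K ∙ x).mkQ (v k))

end WedgeLift

section Minor

variable {R I : Type*} [CommRing R] {m : ℕ}

/-- In degree `m`, the minor on the columns `φ` (pairing with `e*_{φ 0} ∧ ⋯ ∧ e*_{φ (m-1)}`);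
zero in all other degrees. -/
noncomputable def minorFunctional (φ : Fin m → I) : ExteriorAlgebra R (I → R) →ₗ[R] R :=
  liftAlternating (Function.update 0 m
    (Matrix.detRowAlternating.compLinearMap (LinearMap.funLeft R R φ)))

lemma minorFunctional_ιMulti (φ : Fin m → I) (v : Fin m → I → R) :
    minorFunctional φ (ιMulti R m v) = (Matrix.of fun k l => v k (φ l)).det := by
  rw [minorFunctional, liftAlternating_apply_ιMulti, Function.update_self]
  rfl

lemma minorFunctional_ι_mul_ιMulti_single [DecidableEq I] (φ : Fin (m + 1) → I) (x : I → R)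
    (σ : Fin m → I) :
    minorFunctional φ (ι R x * ιMulti R m fun k => Pi.single (σ k) 1) =
      ∑ l : Fin (m + 1),
        (-1) ^ (l : ℕ) * x (φ l) * ((1 : Matrix I I R).submatrix σ (φ ∘ l.succAbove)).det := by
  have hcons : ι R x * ιMulti R m (fun k => Pi.single (σ k) 1) =
      ιMulti R (m + 1) (Fin.cons x fun k => Pi.single (σ k) 1) := by
    rw [ιMulti_succ_apply]
    rfl
  rw [hcons, minorFunctional_ιMulti, Matrix.det_succ_row_zero]
  refine Finset.sum_congr rfl fun l _ => ?_
  congr 2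
  ext k l'
  simp [Matrix.one_eq_pi_single]

lemma ratCast_det_one_submatrix {F : Type*} [Field F] [CharZero F] [DecidableEq I] {n : ℕ}
    (σ τ : Fin n → I) :
    (((1 : Matrix I I ℚ).submatrix σ τ).det : F) = ((1 : Matrix I I F).submatrix σ τ).det := by
  rw [Rat.cast_det, ← Matrix.submatrix_map, Matrix.map_one _ Rat.cast_zero Rat.cast_one]

lemma det_one_submatrix_ofFinEmbEquiv_symm [LinearOrder I] {n : ℕ} (S T : Set.powersetCard I n) :
    ((1 : Matrix I I R).submatrix (ofFinEmbEquiv.symm S) (ofFinEmbEquiv.symm T)).det =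
      if S = T then 1 else 0 := by
  split_ifs with hST
  · rw [hST, Matrix.submatrix_one _ (ofFinEmbEquiv.symm T).injective, Matrix.det_one]
  obtain ⟨a, haS, haT⟩ := (exists_mem_notMem_iff_ne S T).mp hST
  obtain ⟨k, rfl⟩ := (mem_range_ofFinEmbEquiv_symm_iff_mem S a).mpr haS
  refine Matrix.det_eq_zero_of_row_eq_zero k fun l => Matrix.one_apply_ne ?_
  intro hkl
  exact haT (hkl ▸ (mem_range_ofFinEmbEquiv_symm_iff_mem T _).mp (Set.mem_range_self l))

end Minor

/-- if `x₁,…,x_r ∈ ℂ` are `ℚ`-linearly independent, then for `0 ≤ i ≤ r−1`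
the wedges `π(e_{j₁}) ∧ ⋯ ∧ π(e_{jᵢ})` (over subsets `{j₁<⋯<jᵢ}` of `{1,…,r}`) of the
images of the standard basis vectors in `ℂ^r/ℂ·x` are `ℚ`-linearly independent in
`⋀ⁱ(ℂ^r/ℂ·x)`. -/
theorem statement14 (r : ℕ) (hr : 2 ≤ r) (x : Fin r → ℂ)
    (hx : LinearIndependent ℚ x) :
    ∀ i : ℕ, i ≤ r - 1 →
      LinearIndependent ℚ
        (fun s : {s : Finset (Fin r) // s.card = i} =>
          (ExteriorAlgebra.ιMulti_family ℂ i
            (fun j : Fin r =>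
              Submodule.mkQ (Submodule.span ℂ {x}) (Pi.single j 1)) s :
            ExteriorAlgebra ℂ ((Fin r → ℂ) ⧸ Submodule.span ℂ {x}))) := by
  intro i hi
  change LinearIndependent ℚ (ιMulti_family ℂ i fun j : Fin r => (ℂ ∙ x).mkQ (Pi.single j 1))
  rw [Fintype.linearIndependent_iff]
  intro q hq S₀
  obtain ⟨j₀, -, hj₀⟩ := Finset.exists_mem_notMem_of_card_lt_card (s := S₀.val)
    (t := Finset.univ) (by rw [Finset.card_univ, Fintype.card_fin, S₀.2]; omega)
  -- With this ordering of `S₀ ∪ {j₀}`, the coefficient of `x j₀` below is exactly `q S₀`.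
  let φ : Fin (i + 1) → Fin r := Fin.cons j₀ (ofFinEmbEquiv.symm S₀)
  have hφ : φ.Injective := Fin.cons_injective_iff.mpr
    ⟨by rwa [mem_range_ofFinEmbEquiv_symm_iff_mem], (ofFinEmbEquiv.symm S₀).injective⟩
  let c S (l : Fin (i + 1)) : ℚ := (-1) ^ (l : ℕ) *
    ((1 : Matrix (Fin r) (Fin r) ℚ).submatrix (ofFinEmbEquiv.symm S) (φ ∘ l.succAbove)).det
  have hω S : minorFunctional φ
      (wedgeLift x (ιMulti_family ℂ i (fun j => (ℂ ∙ x).mkQ (Pi.single j 1)) S)) =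
      ∑ l, (c S l : ℂ) * x (φ l) := by
    trans minorFunctional φ (ι ℂ x * ιMulti ℂ i fun k => Pi.single (ofFinEmbEquiv.symm S k) 1)
    · exact congrArg _ (wedgeLift_ιMulti_mkQ x _)
    rw [minorFunctional_ι_mul_ιMulti_single]
    refine Finset.sum_congr rfl fun l _ => ?_
    rw [Rat.cast_mul, ratCast_det_one_submatrix]
    push_cast
    ring
  have hrel := congrArg (minorFunctional φ ∘ₗ wedgeLift x) hq
  simp only [map_sum, rat_smul_eq_cast_smul, map_smul, LinearMap.comp_apply, hω, map_zero,
    smul_eq_mul] at hrel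
  simpa [c, φ, det_one_submatrix_ofFinEmbEquiv_symm] using
    sum_mul_eq_zero_of_linearIndependent (hx.comp φ hφ) hrel 0

end EGG14
end

section
/- Let τ, σ ∈ ℂ with Im τ > 0 and Im σ > 0 (hence Im(τ+σ) > 0), and let z ∈ ℂ with z ∉ {jτ + kσ + l : j, k, l ∈ ℤ}. Then Γ(z,τ,σ) = Γ(z,τ,τ+σ) · Γ(z+σ,τ+σ,σ). -/
namespace EGG

/-!
Numerator and denominator of `Γ(z,τ,σ)` are products over `(j,k) ∈ ℕ²`. Cutting `ℕ²` along the
diagonal, the part `k < j` (resp. `k ≤ j`) of each product is the corresponding product of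
`Γ(z,τ,τ+σ)` and the part `j ≤ k` (resp. `j < k`) that of `Γ(z+σ,τ+σ,σ)`. Since
`∑ |e^{2πi(jτ+kσ+c)}| < ∞`, every product over a subset of `ℕ²` converges, which justifies
the splitting.
-/

open Complex
open scoped Real

noncomputable def latticeFactor (τ σ c : ℂ) (p : ℕ × ℕ) : ℂ :=
  1 - cexp (2 * π * I * (p.1 * τ + p.2 * σ + c))

lemma norm_exp_lattice (τ σ c : ℂ) (p : ℕ × ℕ) :
    ‖cexp (2 * π * I * (p.1 * τ + p.2 * σ + c))‖ =
      Real.exp (-(2 * π * τ.im)) ^ p.1 *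
        (Real.exp (-(2 * π * σ.im)) ^ p.2 * Real.exp (-(2 * π * c.im))) := by
  rw [norm_exp, ← Real.exp_nat_mul, ← Real.exp_nat_mul, ← Real.exp_add, ← Real.exp_add]
  congr 1
  simp [mul_re, mul_im]
  ring

lemma summable_norm_exp_lattice {τ σ : ℂ} (hτ : 0 < τ.im) (hσ : 0 < σ.im) (c : ℂ) :
    Summable fun p : ℕ × ℕ => ‖cexp (2 * π * I * (p.1 * τ + p.2 * σ + c))‖ := by
  have geom {w : ℂ} (hw : 0 < w.im) : Summable fun n : ℕ => Real.exp (-(2 * π * w.im)) ^ n :=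
    summable_geometric_of_lt_one (Real.exp_nonneg _)
      (Real.exp_lt_one_iff.mpr (by nlinarith [Real.pi_pos]))
  refine ((geom hτ).mul_of_nonneg ((geom hσ).mul_right (Real.exp (-(2 * π * c.im))))
    (fun _ => by positivity) (fun _ => by positivity)).congr fun p => ?_
  exact (norm_exp_lattice τ σ c p).symm

lemma multipliable_latticeFactor_comp {ι : Type*} {τ σ : ℂ} (hτ : 0 < τ.im) (hσ : 0 < σ.im)
    (c : ℂ) {g : ι → ℕ × ℕ} (hg : g.Injective) :
    Multipliable fun i => latticeFactor τ σ c (g i) := by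
  simp only [latticeFactor, sub_eq_add_neg]
  refine multipliable_one_add_of_summable ?_
  simpa only [norm_neg, Function.comp_def] using
    (summable_norm_exp_lattice hτ hσ c).comp_injective hg

lemma tprod_latticeFactor_eq_mul {α β : Type*} (e : α ⊕ β ≃ ℕ × ℕ) {τ σ : ℂ}
    (hτ : 0 < τ.im) (hσ : 0 < σ.im) (c : ℂ) :
    ∏' p, latticeFactor τ σ c p =
      (∏' a, latticeFactor τ σ c (e (.inl a))) * ∏' b, latticeFactor τ σ c (e (.inr b)) := by
  rw [← e.tprod_eq]
  exact Multipliable.tprod_sum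
    (multipliable_latticeFactor_comp hτ hσ c (e.injective.comp Sum.inl_injective))
    (multipliable_latticeFactor_comp hτ hσ c (e.injective.comp Sum.inr_injective))

/-- `ℕ²` cut along the diagonal into `{k < j}` and `{j ≤ k}`. -/
def natProdSplitLt : (ℕ × ℕ) ⊕ (ℕ × ℕ) ≃ ℕ × ℕ where
  toFun := Sum.elim (fun p => (p.1 + p.2 + 1, p.2)) (fun p => (p.1, p.1 + p.2))
  invFun p := if p.2 < p.1 then .inl (p.1 - p.2 - 1, p.2) else .inr (p.1, p.2 - p.1)
  left_inv := by rintro (⟨j, k⟩ | ⟨j, k⟩) <;> simp; omega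
  right_inv := by rintro ⟨j, k⟩; by_cases h : k < j <;> simp [h] <;> omega

/-- `ℕ²` cut along the diagonal into `{k ≤ j}` and `{j < k}`. -/
def natProdSplitLe : (ℕ × ℕ) ⊕ (ℕ × ℕ) ≃ ℕ × ℕ where
  toFun := Sum.elim (fun p => (p.1 + p.2, p.2)) (fun p => (p.1, p.1 + p.2 + 1))
  invFun p := if p.2 ≤ p.1 then .inl (p.1 - p.2, p.2) else .inr (p.1, p.2 - p.1 - 1)
  left_inv := by rintro (⟨j, k⟩ | ⟨j, k⟩) <;> simp; omega
  right_inv := by rintro ⟨j, k⟩; by_cases h : k ≤ j <;> simp [h]; omega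

lemma ellGamma_eq_div_tprod_latticeFactor (z τ σ : ℂ) :
    ellGamma z τ σ =
      (∏' p, latticeFactor τ σ (τ + σ - z) p) / ∏' p, latticeFactor τ σ z p := by
  simp only [ellGamma, latticeFactor]
  congr 2 with p
  ring_nf

theorem statement16_general (z τ σ : ℂ) (hτ : 0 < τ.im) (hσ : 0 < σ.im) :
    ellGamma z τ σ = ellGamma z τ (τ + σ) * ellGamma (z + σ) (τ + σ) σ := by
  simp only [ellGamma_eq_div_tprod_latticeFactor]
  rw [div_mul_div_comm, tprod_latticeFactor_eq_mul natProdSplitLt hτ hσ,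
    tprod_latticeFactor_eq_mul natProdSplitLe hτ hσ]
  congr 2 <;> refine tprod_congr fun p => ?_ <;>
    simp only [latticeFactor, natProdSplitLt, natProdSplitLe, Equiv.coe_fn_mk, Sum.elim_inl,
      Sum.elim_inr] <;> push_cast <;> ring_nf

/-- the three-term relation
`Γ(z,τ,σ) = Γ(z,τ,τ+σ)·Γ(z+σ,τ+σ,σ)`. -/
theorem statement16 (z τ σ : ℂ) (hτ : 0 < τ.im) (hσ : 0 < σ.im)
    (hz : ∀ j k l : ℤ, z ≠ (j : ℂ) * τ + (k : ℂ) * σ + (l : ℂ)) :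
    ellGamma z τ σ = ellGamma z τ (τ + σ) * ellGamma (z + σ) (τ + σ) σ :=
  statement16_general z τ σ hτ hσ

end EGG
end

section
/- Let τ, σ ∈ ℂ with Im τ > 0 and Im σ > 0, and let z ∈ ℂ with z ∉ {jτ + kσ + l : j, k, l ∈ ℤ}. Then the elliptic gamma function satisfies the two difference equations Γ(z+τ,τ,σ) = θ₀(z,σ)·Γ(z,τ,σ) and Γ(z+σ,τ,σ) = θ₀(z,τ)·Γ(z,τ,σ). -/
namespace EGG

/-!
Writing `e(u) = exp(2πiu)`, `p = e(τ)`, `q = e(σ)`, the elliptic gamma function is the quotient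
`(e(τ + σ - z); p, q)_∞ / (e(z); p, q)_∞` of double `q`-Pochhammer symbols, and
`θ₀(z, σ) = (e(σ - z); q)_∞ (e(z); q)_∞`. Splitting off the row `j = 0` of a double product gives
`(x; p, q)_∞ = (x; q)_∞ (xp; p, q)_∞`; applied to numerator and denominator of `Γ(z + τ, τ, σ)`
this produces exactly the two factors of `θ₀(z, σ)`, and the extra factor `(e(z); q)_∞` cancels
because `z` lies off the lattice. The second equation follows from `Γ(z, τ, σ) = Γ(z, σ, τ)`.
-/

open Complex Real

section InfiniteProducts

variable {ι : Type*} {f : ι → ℂ}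

lemma multipliable_one_sub_of_summable_norm (hf : Summable fun i ↦ ‖f i‖) :
    Multipliable fun i ↦ 1 - f i := by
  simpa [sub_eq_add_neg] using multipliable_one_add_of_summable (f := fun i ↦ -f i) (by simpa)

lemma tprod_one_sub_ne_zero_of_summable_norm (hf1 : ∀ i, f i ≠ 1)
    (hf : Summable fun i ↦ ‖f i‖) : ∏' i, (1 - f i) ≠ 0 := by
  simpa [sub_eq_add_neg] using tprod_one_add_ne_zero_of_summable (f := fun i ↦ -f i)
    (fun i ↦ by simpa [← sub_eq_add_neg, sub_eq_zero] using (hf1 i).symm) (by simpa)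

lemma tprod_nat_prod_eq_mul {M : Type*} [CommMonoid M] [TopologicalSpace M] [ContinuousMul M]
    [T2Space M] {g : ℕ × ℕ → M} (h₀ : Multipliable fun k ↦ g (0, k))
    (h₁ : Multipliable fun p : ℕ × ℕ ↦ g (p.1 + 1, p.2)) :
    ∏' p, g p = (∏' k, g (0, k)) * ∏' p : ℕ × ℕ, g (p.1 + 1, p.2) := by
  have hi₀ : Function.Injective fun k : ℕ ↦ ((0, k) : ℕ × ℕ) := fun _ _ h ↦ (Prod.ext_iff.1 h).2
  have hi₁ : Function.Injective fun p : ℕ × ℕ ↦ ((p.1 + 1, p.2) : ℕ × ℕ) := fun p q h ↦ by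
    simpa [Prod.ext_iff] using h
  have hcompl : IsCompl (Set.range fun k : ℕ ↦ ((0, k) : ℕ × ℕ))
      (Set.range fun p : ℕ × ℕ ↦ ((p.1 + 1, p.2) : ℕ × ℕ)) := by
    constructor
    · rw [Set.disjoint_iff]
      rintro _ ⟨⟨k, rfl⟩, ⟨p, hp⟩⟩
      simp [Prod.ext_iff] at hp
    · rw [codisjoint_iff_le_sup]
      rintro ⟨_ | a, b⟩ _
      · exact Or.inl ⟨b, rfl⟩
      · exact Or.inr ⟨(a, b), rfl⟩
  exact ((hi₀.hasProd_range_iff.2 h₀.hasProd).mul_isCompl hcompl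
    (hi₁.hasProd_range_iff.2 h₁.hasProd)).tprod_eq

end InfiniteProducts

lemma cexp_two_pi_I_mul_ne_one {u : ℂ} (hu : ∀ n : ℤ, u ≠ n) :
    cexp (2 * π * I * u) ≠ 1 := by
  rw [Ne, Complex.exp_eq_one_iff]
  rintro ⟨n, hn⟩
  exact hu n (mul_left_cancel₀ two_pi_I_ne_zero (by linear_combination hn))

lemma summable_norm_cexp_two_pi_I_nat_mul_add {σ : ℂ} (hσ : 0 < σ.im) (c : ℂ) :
    Summable fun k : ℕ ↦ ‖cexp (2 * π * I * (k * σ + c))‖ := by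
  have h (k : ℕ) :
      cexp (2 * π * I * (k * σ + c)) = cexp (2 * π * I * σ) ^ k * cexp (2 * π * I * c) := by
    rw [← Complex.exp_nat_mul, ← Complex.exp_add]
    congr 1
    ring
  simp_rw [h, norm_mul, norm_pow]
  exact (summable_geometric_of_lt_one (norm_nonneg _)
    (UpperHalfPlane.norm_exp_two_pi_I_lt_one ⟨σ, hσ⟩)).mul_right _

lemma summable_norm_cexp_two_pi_I_nat_mul_add_nat_mul_add {τ σ : ℂ} (hτ : 0 < τ.im)
    (hσ : 0 < σ.im) (c : ℂ) :
    Summable fun p : ℕ × ℕ ↦ ‖cexp (2 * π * I * (p.1 * τ + p.2 * σ + c))‖ := by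
  have h (p : ℕ × ℕ) : cexp (2 * π * I * (p.1 * τ + p.2 * σ + c)) =
      cexp (2 * π * I * (p.1 * τ + c)) * cexp (2 * π * I * (p.2 * σ + 0)) := by
    rw [← Complex.exp_add]
    congr 1
    ring
  simp_rw [h]
  exact Summable.mul_norm (f := fun j : ℕ ↦ cexp (2 * π * I * (j * τ + c)))
    (g := fun k : ℕ ↦ cexp (2 * π * I * (k * σ + 0)))
    (summable_norm_cexp_two_pi_I_nat_mul_add hτ c) (summable_norm_cexp_two_pi_I_nat_mul_add hσ 0)

section Pochhammer

/-- The `q`-Pochhammer symbol `(x; q)_∞ = ∏_{k ≥ 0} (1 - x q^k)` at `x = e(c)`, `q = e(σ)`,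
where `e(u) = exp(2πiu)`. -/
noncomputable def qPochhammer (σ c : ℂ) : ℂ :=
  ∏' k : ℕ, (1 - cexp (2 * π * I * (k * σ + c)))

/-- The double `q`-Pochhammer symbol `(x; p, q)_∞ = ∏_{j,k ≥ 0} (1 - x p^j q^k)` at `x = e(c)`,
`p = e(τ)`, `q = e(σ)`. -/
noncomputable def qPochhammer₂ (τ σ c : ℂ) : ℂ :=
  ∏' p : ℕ × ℕ, (1 - cexp (2 * π * I * (p.1 * τ + p.2 * σ + c)))

variable {τ σ : ℂ}

lemma multipliable_qPochhammer (hσ : 0 < σ.im) (c : ℂ) :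
    Multipliable fun k : ℕ ↦ 1 - cexp (2 * π * I * (k * σ + c)) :=
  multipliable_one_sub_of_summable_norm (summable_norm_cexp_two_pi_I_nat_mul_add hσ c)

lemma multipliable_qPochhammer₂ (hτ : 0 < τ.im) (hσ : 0 < σ.im) (c : ℂ) :
    Multipliable fun p : ℕ × ℕ ↦ 1 - cexp (2 * π * I * (p.1 * τ + p.2 * σ + c)) :=
  multipliable_one_sub_of_summable_norm
    (summable_norm_cexp_two_pi_I_nat_mul_add_nat_mul_add hτ hσ c)

lemma qPochhammer₂_ne_zero (hτ : 0 < τ.im) (hσ : 0 < σ.im) {c : ℂ}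
    (hc : ∀ (j k : ℕ) (n : ℤ), j * τ + k * σ + c ≠ n) : qPochhammer₂ τ σ c ≠ 0 :=
  tprod_one_sub_ne_zero_of_summable_norm (fun p ↦ cexp_two_pi_I_mul_ne_one (hc p.1 p.2))
    (summable_norm_cexp_two_pi_I_nat_mul_add_nat_mul_add hτ hσ c)

lemma qPochhammer₂_comm (τ σ c : ℂ) : qPochhammer₂ τ σ c = qPochhammer₂ σ τ c := by
  rw [qPochhammer₂, ← (Equiv.prodComm ℕ ℕ).tprod_eq]
  exact tprod_congr fun p ↦ by
    simp only [Equiv.prodComm_apply, Prod.fst_swap, Prod.snd_swap]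
    ring_nf

lemma qPochhammer₂_eq_mul (hτ : 0 < τ.im) (hσ : 0 < σ.im) (c : ℂ) :
    qPochhammer₂ τ σ c = qPochhammer σ c * qPochhammer₂ τ σ (c + τ) := by
  have hrow (p : ℕ × ℕ) :
      ((p.1 + 1 : ℕ) : ℂ) * τ + p.2 * σ + c = p.1 * τ + p.2 * σ + (c + τ) := by
    push_cast; ring
  rw [qPochhammer₂, tprod_nat_prod_eq_mul (by simpa using multipliable_qPochhammer hσ c)
    (by simpa only [hrow] using multipliable_qPochhammer₂ hτ hσ (c + τ))]
  simp only [hrow, Nat.cast_zero, zero_mul, zero_add]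
  rfl

end Pochhammer

lemma ellGamma_eq_div (z τ σ : ℂ) :
    ellGamma z τ σ = qPochhammer₂ τ σ (τ + σ - z) / qPochhammer₂ τ σ z := by
  rw [ellGamma, qPochhammer₂, qPochhammer₂]
  congr 1
  exact tprod_congr fun p ↦ by ring_nf

lemma ellGamma_comm (z τ σ : ℂ) : ellGamma z τ σ = ellGamma z σ τ := by
  rw [ellGamma_eq_div, ellGamma_eq_div, qPochhammer₂_comm τ, qPochhammer₂_comm τ, add_comm τ]

lemma theta0_eq_mul {σ : ℂ} (hσ : 0 < σ.im) (z : ℂ) :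
    theta0 z σ = qPochhammer σ (σ - z) * qPochhammer σ z := by
  have hshift (j : ℕ) : ((j : ℂ) + 1) * σ - z = j * σ + (σ - z) := by ring
  rw [theta0, Multipliable.tprod_mul
    (by simpa only [hshift] using multipliable_qPochhammer hσ (σ - z))
    (multipliable_qPochhammer hσ z)]
  simp only [hshift]
  rfl

lemma ellGamma_add_left {z τ σ : ℂ} (hτ : 0 < τ.im) (hσ : 0 < σ.im)
    (hz : ∀ j k l : ℤ, z ≠ j * τ + k * σ + l) :
    ellGamma (z + τ) τ σ = theta0 z σ * ellGamma z τ σ := by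
  have hD : qPochhammer₂ τ σ z ≠ 0 := qPochhammer₂_ne_zero hτ hσ fun j k n h ↦
    hz (-j) (-k) n (by push_cast; linear_combination h)
  rw [qPochhammer₂_eq_mul hτ hσ, mul_ne_zero_iff] at hD
  rw [ellGamma_eq_div, ellGamma_eq_div, theta0_eq_mul hσ, qPochhammer₂_eq_mul hτ hσ z,
    show τ + σ - (z + τ) = σ - z by ring, qPochhammer₂_eq_mul hτ hσ (σ - z),
    show σ - z + τ = τ + σ - z by ring]
  field_simp [hD.1, hD.2]

/-- the difference equations
`Γ(z+τ,τ,σ) = θ₀(z,σ)·Γ(z,τ,σ)` and `Γ(z+σ,τ,σ) = θ₀(z,τ)·Γ(z,τ,σ)`. -/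
theorem statement19 (z τ σ : ℂ) (hτ : 0 < τ.im) (hσ : 0 < σ.im)
    (hz : ∀ j k l : ℤ, z ≠ (j : ℂ) * τ + (k : ℂ) * σ + (l : ℂ)) :
    ellGamma (z + τ) τ σ = theta0 z σ * ellGamma z τ σ ∧
    ellGamma (z + σ) τ σ = theta0 z τ * ellGamma z τ σ := by
  refine ⟨ellGamma_add_left hτ hσ hz, ?_⟩
  rw [ellGamma_comm (z + σ), ellGamma_comm z]
  exact ellGamma_add_left hσ hτ fun j k l h ↦ hz k j l (by linear_combination h)

end EGG
end
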